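/- arXiv:1706.02277 — 7 statements merged into one kernel-verified Lean document; each statement's English description precedes it below -/
import Mathlib

section
/- A subset C of a product X₁ × ⋯ × X_k is a cylinder intersection (i.e., an intersection C = ⋂ᵢ Cᵢ where each Cᵢ is a cylinder in the i-th coordinate, meaning membership in Cᵢ does not depend on the i-th coordinate) if and only if for every star contained in C, the star's center also belongs to C. Here a star with center (x₁,…,x_k) is a set of k points {(x₁',x₂,…,x_k), (x₁,x₂',…,x_k), …, (x₁,…,x_{k-1},x_k')} with xᵢ' ≠ xᵢ for each i. -/
/-- `C` is a cylinder in the `i`-th coordinate: membership does not depend on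
the `i`-th coordinate. -/
def IsCylinder {k : ℕ} {X : Fin k → Type*} (i : Fin k) (C : Set (∀ j, X j)) : Prop :=
  ∀ x y : ∀ j, X j, (∀ j, j ≠ i → x j = y j) → (x ∈ C ↔ y ∈ C)

/-- `C` is a cylinder intersection: an intersection of `k` sets, the `i`-th of which
is a cylinder in the `i`-th coordinate. -/
def IsCylinderIntersection {k : ℕ} {X : Fin k → Type*} (C : Set (∀ j, X j)) : Prop :=
  ∃ Cs : Fin k → Set (∀ j, X j), (∀ i, IsCylinder i (Cs i)) ∧ C = ⋂ i, Cs i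

/-- A set `C ⊆ X₁ × ⋯ × X_k` is a cylinder intersection if and only if for every star
contained in `C` (given by a center `x` and points `Function.update x i (x' i)` with
`x' i ≠ x i`), the center `x` also belongs to `C`. -/
theorem cylinder_intersection_iff_star_closed {k : ℕ} {X : Fin k → Type*}
    (C : Set (∀ j, X j)) :
    IsCylinderIntersection C ↔
      ∀ x x' : ∀ j, X j,
        (∀ i : Fin k, x' i ≠ x i ∧ Function.update x i (x' i) ∈ C) → x ∈ C := by
  constructor
  · rintro ⟨Cs, hcyl, rfl⟩ x x' hx
    refine Set.mem_iInter.mpr fun i => ?_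
    have hmem : Function.update x i (x' i) ∈ Cs i := Set.mem_iInter.mp (hx i).2 i
    exact (hcyl i x (Function.update x i (x' i))
      (fun j hj => (Function.update_of_ne hj _ _).symm)).mpr hmem
  · intro h
    refine ⟨fun i => {x | ∃ z, Function.update x i z ∈ C}, fun i x y hxy => ?_, ?_⟩
    · have key : ∀ z, Function.update x i z = Function.update y i z := by
        intro z
        funext j
        by_cases hj : j = i
        · subst hj; simp
        · simp [Function.update_of_ne hj, hxy j hj]
      constructor
      · rintro ⟨z, hz⟩; exact ⟨z, (key z) ▸ hz⟩
      · rintro ⟨z, hz⟩; exact ⟨z, (key z) ▸ hz⟩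
    · ext x
      simp only [Set.mem_iInter, Set.mem_setOf_eq]
      constructor
      · intro hx i
        exact ⟨x i, by simpa using hx⟩
      · intro hx
        choose y hy using hx
        by_cases he : ∃ i, y i = x i
        · obtain ⟨i, hi⟩ := he
          have := hy i
          rwa [hi, Function.update_eq_self] at this
        · push_neg at he
          exact h x y (fun i => ⟨he i, hy i⟩)
end

section
/- Let f : X₁ × ⋯ × X_k → {0,1} be a weak graph function, meaning for every (x₁,…,x_{k-1}) there is at most one y with f(x₁,…,x_{k-1},y) = 1. Let C ⊆ f⁻¹(1). Then C is a cylinder intersection if and only if C contains no star (where a star is a k-element set {(x₁',x₂,…,x_k), …, (x₁,…,x_k')} with xᵢ' ≠ xᵢ for each i, and its center is (x₁,…,x_k)). -/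
/-- `C` contains a star: there is a center `x` and points `Function.update x i (x' i)`
with `x' i ≠ x i` for each `i`, all belonging to `C`. -/
def ContainsStar {k : ℕ} {X : Fin k → Type*} (C : Set (∀ j, X j)) : Prop :=
  ∃ x x' : ∀ j, X j, ∀ i : Fin k, x' i ≠ x i ∧ Function.update x i (x' i) ∈ C

/-- `f` is a weak graph function: for every `(x₁,…,x_k)` there is at most one value `y`
in the last coordinate with `f(x₁,…,x_{k},y) = 1`. (Here there are `k+1` coordinates.) -/
def IsWeakGraphFunction {k : ℕ} {X : Fin (k + 1) → Type*} (f : (∀ j, X j) → Bool) : Prop :=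
  ∀ (x : ∀ j, X j) (y₁ y₂ : X (Fin.last k)),
    f (Function.update x (Fin.last k) y₁) = true →
    f (Function.update x (Fin.last k) y₂) = true → y₁ = y₂

/-- For a weak graph function `f` and `C ⊆ f⁻¹(1)`, the set `C` is a cylinder
intersection if and only if it contains no star. -/
theorem cylinder_intersection_iff_no_star_of_weakGraph {k : ℕ} {X : Fin (k + 1) → Type*}
    (f : (∀ j, X j) → Bool) (hf : IsWeakGraphFunction f)
    (C : Set (∀ j, X j)) (hC : C ⊆ {x | f x = true}) :
    IsCylinderIntersection C ↔ ¬ ContainsStar C := by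
  constructor
  · rintro ⟨Cs, hcyl, rfl⟩ ⟨x, x', hstar⟩
    have hxC : x ∈ ⋂ i, Cs i := by
      refine Set.mem_iInter.2 fun i => ?_
      have hmem : Function.update x i (x' i) ∈ Cs i :=
        Set.mem_iInter.1 (hstar i).2 i
      exact (hcyl i x (Function.update x i (x' i))
        (fun j hj => (Function.update_of_ne hj _ _).symm)).2 hmem
    have h1 : f x = true := hC hxC
    have h2 : f (Function.update x (Fin.last k) (x' (Fin.last k))) = true :=
      hC ((hstar (Fin.last k)).2)
    have := hf x (x (Fin.last k)) (x' (Fin.last k)) (by simpa using h1) h2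
    exact (hstar (Fin.last k)).1 this.symm
  · intro hns
    refine ⟨fun i => {y | ∃ z, Function.update y i z ∈ C}, fun i x y hxy => ?_, ?_⟩
    · have key : ∀ z, Function.update x i z = Function.update y i z := by
        intro z
        funext j
        by_cases hj : j = i
        · subst hj; simp
        · simp [Function.update_of_ne hj, hxy j hj]
      constructor <;> rintro ⟨z, hz⟩ <;> exact ⟨z, by rw [key] at *; exact hz⟩
    · ext x
      simp only [Set.mem_iInter, Set.mem_setOf_eq]
      constructor
      · intro hx i
        exact ⟨x i, by simpa using hx⟩
      · intro hx
        choose z hz using hx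
        by_cases h : ∃ i, z i = x i
        · obtain ⟨i, hi⟩ := h
          have := hz i
          rwa [hi, Function.update_eq_self] at this
        · push_neg at h
          exact absurd ⟨x, z, fun i => ⟨h i, hz i⟩⟩ hns
end

section
/- Let k ≥ 3 and suppose (S₁',S₂,…,S_k), (S₁,S₂',…,S_k), …, (S₁,…,S_{k-1},S_k') are k-tuples of subsets of [n] each forming a partition of [n], with Sᵢ' ≠ Sᵢ for all i. Then the sets S₁,…,S_k are pairwise disjoint, and for every j, S_j' = S_j ∪ ([n] \ (S₁ ∪ ⋯ ∪ S_k)). -/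
def IsPartitionTuple (n k : ℕ) (S : Fin k → Finset (Fin n)) : Prop :=
  (∀ i j, i ≠ j → Disjoint (S i) (S j)) ∧ ∀ x : Fin n, ∃ i, x ∈ S i

/-- Let `k ≥ 3` and suppose the `k` tuples obtained from `(S₁,…,S_k)` by replacing the
`i`-th coordinate with `Sᵢ' ≠ Sᵢ` each form a partition of `[n]` (i.e. the tuples form a
star with center `(S₁,…,S_k)` inside `Part_{n,k}⁻¹(1)`). Then `S₁,…,S_k` are pairwise
disjoint and `S_j' = S_j ∪ ([n] \ (S₁ ∪ ⋯ ∪ S_k))` for every `j`. -/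
theorem star_center_structure (n k : ℕ) (hk : 3 ≤ k)
    (S S' : Fin k → Finset (Fin n))
    (hne : ∀ i, S' i ≠ S i)
    (hpart : ∀ i, IsPartitionTuple n k (Function.update S i (S' i))) :
    (∀ i j, i ≠ j → Disjoint (S i) (S j)) ∧
    ∀ j, S' j = S j ∪ (Finset.univ \ Finset.univ.biUnion S) := by
  have hdisj : ∀ i j, i ≠ j → Disjoint (S i) (S j) := by
    intro i j hij
    obtain ⟨l, hli, hlj⟩ : ∃ l : Fin k, l ≠ i ∧ l ≠ j := by
      by_contra h
      push_neg at h
      have hsub : (Finset.univ : Finset (Fin k)) ⊆ {i, j} := by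
        intro l _
        by_cases hl : l = i
        · simp [hl]
        · simp [h l hl]
      have h1 := Finset.card_le_card hsub
      have h2 : ({i, j} : Finset (Fin k)).card ≤ 2 := by
        apply le_trans (Finset.card_insert_le _ _); simp
      simp [Finset.card_univ] at h1
      omega
    have := (hpart l).1 i j hij
    rwa [Function.update_of_ne (Ne.symm hli), Function.update_of_ne (Ne.symm hlj)] at this
  refine ⟨hdisj, fun j => ?_⟩
  ext x
  simp only [Finset.mem_union, Finset.mem_sdiff, Finset.mem_univ, Finset.mem_biUnion,
    true_and]
  constructor
  · intro hx
    by_cases hxj : x ∈ S j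
    · exact Or.inl hxj
    · right
      rintro ⟨i, hxi⟩
      by_cases hij : i = j
      · exact hxj (hij ▸ hxi)
      · have hd := (hpart j).1 j i (Ne.symm hij)
        rw [Function.update_self, Function.update_of_ne hij] at hd
        exact Finset.disjoint_left.mp hd hx hxi
  · rintro (hxj | hnx)
    · obtain ⟨i, hxi⟩ := (hpart j).2 x
      by_cases hij : i = j
      · subst hij; rwa [Function.update_self] at hxi
      · rw [Function.update_of_ne hij] at hxi
        exact absurd hxj (Finset.disjoint_left.mp (hdisj i j hij) hxi)
    · obtain ⟨i, hxi⟩ := (hpart j).2 x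
      by_cases hij : i = j
      · subst hij; rwa [Function.update_self] at hxi
      · rw [Function.update_of_ne hij] at hxi
        exact absurd ⟨i, hxi⟩ hnx
end

section
/- For k ≥ 3 and n ≥ 1, the bijection ψ from partitions (S₁,…,S_k) of [n] to words in [k]^n induces a one-to-one correspondence between stars contained in Part_{n,k}⁻¹(1) (k-tuples of partitions of the form (S₁',S₂,…,S_k),…,(S₁,…,S_k') with Sᵢ' ≠ Sᵢ) and combinatorial lines in [k]^n (sets of k distinct words which, written as rows of a k × n matrix, have all columns in {(x,x,…,x) : x ∈ [k]} ∪ {(1,2,…,k)}, with at least one column equal to (1,2,…,k)). -/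
/-- The map ψ: a partition `(S₁,…,S_k)` of `[n]` is sent to the word whose `x`-th letter
is the (unique, for partitions) index `i` with `x ∈ Sᵢ`. -/
noncomputable def psi (n k : ℕ) (hk : 0 < k) (S : Fin k → Finset (Fin n))
    (x : Fin n) : Fin k :=
  if h : ∃ i, x ∈ S i then h.choose else ⟨0, hk⟩

/-- A combinatorial line in `[k]^n`: a set of `k` words which, written as the rows of a
`k × n` matrix, has all columns either constant or equal to `(1,2,…,k)`, with at least
one column of the latter kind (encoded by a template `w : [n] → Option [k]`, where
`none` marks the moving coordinates). -/
def IsCombinatorialLine (n k : ℕ) (L : Set (Fin n → Fin k)) : Prop :=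
  ∃ w : Fin n → Option (Fin k), (∃ x, w x = none) ∧
    L = Set.range fun j : Fin k => fun x : Fin n => (w x).getD j

/-- A star contained in `Part_{n,k}⁻¹(1)`: the set of `k` tuples obtained from a center
`(S₁,…,S_k)` by replacing the `i`-th coordinate with `Sᵢ' ≠ Sᵢ`, each a partition. -/
def IsStarInPart (n k : ℕ) (T : Set (Fin k → Finset (Fin n))) : Prop :=
  ∃ S S' : Fin k → Finset (Fin n), (∀ i, S' i ≠ S i) ∧
    (∀ i, IsPartitionTuple n k (Function.update S i (S' i))) ∧
    T = {t | ∃ i, t = Function.update S i (S' i)}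

/-! ### Auxiliary lemmas -/

lemma psi_eq_of_mem {n k : ℕ} (hk : 0 < k) {P : Fin k → Finset (Fin n)}
    (hP : IsPartitionTuple n k P) {x : Fin n} {i : Fin k} (hx : x ∈ P i) :
    psi n k hk P x = i := by
  have h : ∃ j, x ∈ P j := ⟨i, hx⟩
  rw [psi, dif_pos h]
  by_contra hne
  exact absurd hx (Finset.disjoint_left.mp (hP.1 _ _ hne) h.choose_spec)

lemma mem_iff_psi_eq {n k : ℕ} (hk : 0 < k) {P : Fin k → Finset (Fin n)}
    (hP : IsPartitionTuple n k P) {x : Fin n} {i : Fin k} :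
    x ∈ P i ↔ psi n k hk P x = i := by
  constructor
  · exact psi_eq_of_mem hk hP
  · intro h
    obtain ⟨j, hj⟩ := hP.2 x
    have := psi_eq_of_mem hk hP hj
    rwa [h.symm.trans this]

lemma psi_injOn {n k : ℕ} (hk : 0 < k) {P Q : Fin k → Finset (Fin n)}
    (hP : IsPartitionTuple n k P) (hQ : IsPartitionTuple n k Q)
    (h : psi n k hk P = psi n k hk Q) : P = Q := by
  funext i
  ext x
  rw [mem_iff_psi_eq hk hP, mem_iff_psi_eq hk hQ, h]

/-- The parts of a combinatorial-line template. -/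
def wS {n k : ℕ} (w : Fin n → Option (Fin k)) (j : Fin k) : Finset (Fin n) :=
  Finset.univ.filter (fun x => w x = some j)

/-- The parts of a combinatorial-line template, augmented by the moving coordinates. -/
def wS' {n k : ℕ} (w : Fin n → Option (Fin k)) (j : Fin k) : Finset (Fin n) :=
  wS w j ∪ Finset.univ.filter (fun x => w x = none)

lemma mem_update_wS_iff {n k : ℕ} (w : Fin n → Option (Fin k)) (i j : Fin k) (x : Fin n) :
    x ∈ Function.update (wS w) i (wS' w i) j ↔ (w x).getD i = j := by
  rcases eq_or_ne j i with rfl | hj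
  · rw [Function.update_self]
    simp only [wS', wS, Finset.mem_union, Finset.mem_filter, Finset.mem_univ, true_and]
    cases h : w x <;> simp
  · rw [Function.update_of_ne hj]
    simp only [wS, Finset.mem_filter, Finset.mem_univ, true_and]
    cases h : w x <;> simp [hj.symm, eq_comm]

lemma wS_partition {n k : ℕ} (w : Fin n → Option (Fin k)) (i : Fin k) :
    IsPartitionTuple n k (Function.update (wS w) i (wS' w i)) := by
  constructor
  · intro a b hab
    rw [Finset.disjoint_left]
    intro x hxa hxb
    rw [mem_update_wS_iff] at hxa hxb
    exact hab (hxa.symm.trans hxb)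
  · intro x
    exact ⟨(w x).getD i, (mem_update_wS_iff w i _ x).mpr rfl⟩

lemma psi_wS {n k : ℕ} (hk : 0 < k) (w : Fin n → Option (Fin k)) (i : Fin k) :
    psi n k hk (Function.update (wS w) i (wS' w i)) = fun x => (w x).getD i := by
  funext x
  exact psi_eq_of_mem hk (wS_partition w i) ((mem_update_wS_iff w i _ x).mpr rfl)

lemma image_star_wS {n k : ℕ} (hk : 0 < k) (w : Fin n → Option (Fin k)) :
    psi n k hk '' {t | ∃ i, t = Function.update (wS w) i (wS' w i)} =
      Set.range fun j : Fin k => fun x : Fin n => (w x).getD j := by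
  ext g
  constructor
  · rintro ⟨t, ⟨i, rfl⟩, rfl⟩
    exact ⟨i, (psi_wS hk w i).symm⟩
  · rintro ⟨i, rfl⟩
    exact ⟨_, ⟨i, rfl⟩, psi_wS hk w i⟩

/-- For `k ≥ 3` and `n ≥ 1`, the bijection ψ induces a one-to-one correspondence
between the stars contained in `Part_{n,k}⁻¹(1)` and the combinatorial lines
in `[k]^n`. -/
theorem stars_biject_lines (n k : ℕ) (hk : 3 ≤ k) (hn : 1 ≤ n) :
    Set.BijOn (fun T => psi n k (by omega) '' T)
      {T | IsStarInPart n k T} {L | IsCombinatorialLine n k L} := by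
  have hk0 : 0 < k := by omega
  refine ⟨?_, ?_, ?_⟩
  · -- MapsTo
    rintro T ⟨S, S', hne, hpart, rfl⟩
    -- the parts of the center are pairwise disjoint
    have hdisj : ∀ a b : Fin k, a ≠ b → Disjoint (S a) (S b) := by
      intro a b hab
      obtain ⟨i, hia, hib⟩ : ∃ i : Fin k, i ≠ a ∧ i ≠ b := by
        by_contra h
        push_neg at h
        have hsub : (Finset.univ : Finset (Fin k)) ⊆ {a, b} := by
          intro i _
          rcases eq_or_ne i a with rfl | hia
          · simp
          · simp [h i hia]
        have := Finset.card_le_card hsub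
        simp only [Finset.card_univ, Fintype.card_fin] at this
        have h2 : ({a, b} : Finset (Fin k)).card ≤ 2 :=
          (Finset.card_insert_le _ _).trans (by simp)
        omega
      have := (hpart i).1 a b hab
      rwa [Function.update_of_ne hia.symm, Function.update_of_ne hib.symm] at this
    -- structure of the outer points
    have hS' : ∀ i (x : Fin n), x ∈ S' i ↔ (x ∈ S i ∨ ∀ j, x ∉ S j) := by
      intro i x
      constructor
      · intro hx
        by_cases h : ∃ j, x ∈ S j
        · obtain ⟨j, hj⟩ := h
          left
          rcases eq_or_ne j i with rfl | hji
          · exact hj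
          · exfalso
            have hd := (hpart i).1 i j (Ne.symm hji)
            rw [Function.update_self, Function.update_of_ne hji] at hd
            exact Finset.disjoint_left.mp hd hx hj
        · right; push_neg at h; exact h
      · intro hx
        obtain ⟨j, hj⟩ := (hpart i).2 x
        rcases eq_or_ne j i with rfl | hji
        · rwa [Function.update_self] at hj
        · rw [Function.update_of_ne hji] at hj
          rcases hx with hx | hx
          · exact absurd hj (Finset.disjoint_left.mp (hdisj i j (Ne.symm hji)) hx)
          · exact absurd hj (hx j)
    -- a moving coordinate exists
    have hD : ∃ x : Fin n, ∀ j, x ∉ S j := by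
      have i : Fin k := ⟨0, hk0⟩
      have hsub : S i ⊆ S' i := fun x hx => (hS' i x).mpr (Or.inl hx)
      obtain ⟨x, hx1, hx2⟩ := Finset.exists_of_ssubset (hsub.ssubset_of_ne (hne i).symm)
      rcases (hS' i x).mp hx1 with h | h
      · exact absurd h hx2
      · exact ⟨x, h⟩
    -- the template
    classical
    set w : Fin n → Option (Fin k) :=
      fun x => if h : ∃ j, x ∈ S j then some h.choose else none with hw
    have hwS : ∀ j (x : Fin n), x ∈ S j ↔ w x = some j := by
      intro j x
      show x ∈ S j ↔ (if h : ∃ j, x ∈ S j then some h.choose else none) = some j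
      by_cases h : ∃ j', x ∈ S j'
      · rw [dif_pos h]
        simp only [Option.some.injEq]
        constructor
        · intro hx
          by_contra hne'
          exact absurd hx (Finset.disjoint_left.mp (hdisj _ _ hne') h.choose_spec)
        · rintro rfl; exact h.choose_spec
      · rw [dif_neg h]
        simp only [reduceCtorEq, iff_false]
        exact fun hx => h ⟨j, hx⟩
    have hwnone : ∀ x : Fin n, w x = none ↔ ∀ j, x ∉ S j := by
      intro x
      show (if h : ∃ j, x ∈ S j then some h.choose else none) = none ↔ ∀ j, x ∉ S j
      by_cases h : ∃ j', x ∈ S j'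
      · rw [dif_pos h]
        simp only [reduceCtorEq, false_iff]
        push_neg
        exact h
      · rw [dif_neg h]
        push_neg at h
        simpa using h
    have hSeq : S = wS w := by
      funext j; ext x
      simp only [wS, Finset.mem_filter, Finset.mem_univ, true_and]
      exact hwS j x
    have hS'eq : ∀ i, S' i = wS' w i := by
      intro i; ext x
      rw [hS' i x, hwS i x, ← hwnone x]
      simp only [wS', wS, Finset.mem_union, Finset.mem_filter, Finset.mem_univ, true_and]
    have hTeq : {t | ∃ i, t = Function.update S i (S' i)} =
        {t | ∃ i, t = Function.update (wS w) i (wS' w i)} := by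
      ext t
      constructor <;> rintro ⟨i, rfl⟩ <;> exact ⟨i, by rw [hSeq, hS'eq]⟩
    rw [Set.mem_setOf_eq]
    refine ⟨w, ?_, ?_⟩
    · obtain ⟨x, hx⟩ := hD
      exact ⟨x, (hwnone x).mpr hx⟩
    · show psi n k _ '' _ = _
      rw [hTeq, image_star_wS hk0 w]
  · -- InjOn
    rintro T ⟨S, S', hne, hpart, rfl⟩ T' ⟨Q, Q', hne', hpart', rfl⟩ h
    simp only at h
    have hsub : ∀ (S S' Q Q' : Fin k → Finset (Fin n)),
        (∀ i, IsPartitionTuple n k (Function.update S i (S' i))) →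
        (∀ i, IsPartitionTuple n k (Function.update Q i (Q' i))) →
        psi n k hk0 '' {t | ∃ i, t = Function.update S i (S' i)} =
          psi n k hk0 '' {t | ∃ i, t = Function.update Q i (Q' i)} →
        {t | ∃ i, t = Function.update S i (S' i)} ⊆
          {t | ∃ i, t = Function.update Q i (Q' i)} := by
      intro S S' Q Q' hpart hpart' h t ht
      obtain ⟨i, rfl⟩ := ht
      have : psi n k hk0 (Function.update S i (S' i)) ∈
          psi n k hk0 '' {t | ∃ i, t = Function.update Q i (Q' i)} := by
        rw [← h]; exact ⟨_, ⟨i, rfl⟩, rfl⟩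
      obtain ⟨t', ⟨i', rfl⟩, ht'⟩ := this
      exact ⟨i', psi_injOn hk0 (hpart i) (hpart' i') ht'.symm⟩
    exact Set.Subset.antisymm (hsub S S' Q Q' hpart hpart' h)
      (hsub Q Q' S S' hpart' hpart h.symm)
  · -- SurjOn
    rintro L ⟨w, ⟨x₀, hx₀⟩, rfl⟩
    refine ⟨{t | ∃ i, t = Function.update (wS w) i (wS' w i)}, ?_, ?_⟩
    · refine ⟨wS w, wS' w, ?_, wS_partition w, rfl⟩
      intro i h
      have hx1 : x₀ ∈ wS' w i := by
        simp [wS', hx₀]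
      have hx2 : x₀ ∉ wS w i := by
        simp [wS, hx₀]
      rw [h] at hx1
      exact hx2 hx1
    · exact image_star_wS hk0 w
end

section
/- For k ≥ 3 and n ≥ 1, the density Hales-Jewett number c_{n,k} (the maximum size of a subset of [k]^n containing no combinatorial line) equals the maximum size of a 1-monochromatic cylinder intersection with respect to Part_{n,k}, i.e., the maximum size of a cylinder intersection contained in the set of k-tuples of subsets of [n] forming a partition of [n]. -/
/-- The density Hales-Jewett number `c_{n,k}`: the maximum size of a subset of `[k]^n`
containing no combinatorial line. -/
noncomputable def densityHJ (n k : ℕ) : ℕ :=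
  sSup {m | ∃ A : Set (Fin n → Fin k),
    (¬ ∃ L, IsCombinatorialLine n k L ∧ L ⊆ A) ∧ Nat.card A = m}

/-!
A word `w ∈ [k]^n` corresponds bijectively to the partition tuple of its colour classes
`(w⁻¹(1), …, w⁻¹(k))`, so it suffices to match line-free sets of words with cylinder
intersections of partition tuples.

The `i`-th word of a combinatorial line with template `u` has colour-class tuple agreeing off
coordinate `i` with `(u⁻¹(1), …, u⁻¹(k))`, which misses the free coordinates and so is not a
partition; a cylinder intersection containing the whole line contains this tuple too.

Conversely, let `C_i` be the set of tuples agreeing off coordinate `i` with the colour classes of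
some word of `A`. If `S ∈ ⋂ C_i`, with witnesses `w_i`, then since `k ≥ 3` any two coordinates
of `S` are realised by a common witness, so `S` is pairwise disjoint; hence every witness takes
the value `c` on `S c`, while `w_j` takes the value `j` outside `⋃ S`. Either `S` covers `[n]`
and is the tuple of any witness, or `w_1, …, w_k` is a combinatorial line in `A`.
-/

section ColourClasses

variable {n k : ℕ}

def colourClasses (w : Fin n → Fin k) : Fin k → Finset (Fin n) :=
  fun i => {x | w x = i}

@[simp]
lemma mem_colourClasses {w : Fin n → Fin k} {i : Fin k} {x : Fin n} :
    x ∈ colourClasses w i ↔ w x = i := by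
  simp [colourClasses]

lemma isPartitionTuple_colourClasses (w : Fin n → Fin k) :
    IsPartitionTuple n k (colourClasses w) :=
  ⟨fun _ _ hij => Finset.disjoint_left.2 fun _ hi hj =>
      hij ((mem_colourClasses.1 hi).symm.trans (mem_colourClasses.1 hj)),
    fun x => ⟨w x, mem_colourClasses.2 rfl⟩⟩

lemma colourClasses_injective : Function.Injective (colourClasses (n := n) (k := k)) := by
  intro w w' h
  funext x
  have hx : x ∈ colourClasses w' (w x) := h ▸ mem_colourClasses.2 rfl
  exact (mem_colourClasses.1 hx).symm

lemma range_colourClasses :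
    Set.range (colourClasses (n := n) (k := k)) = {S | IsPartitionTuple n k S} := by
  refine Set.Subset.antisymm (Set.range_subset_iff.2 isPartitionTuple_colourClasses) ?_
  intro S hS
  choose w hw using hS.2
  refine ⟨w, funext fun i => Finset.ext fun x => ?_⟩
  rw [mem_colourClasses]
  refine ⟨fun hwx => hwx ▸ hw x, fun hx => ?_⟩
  by_contra hne
  exact Finset.disjoint_left.1 (hS.1 _ _ hne) (hw x) hx

end ColourClasses

section LineFree

variable {n k : ℕ}

def LineFree (A : Set (Fin n → Fin k)) : Prop :=
  ¬ ∃ L, IsCombinatorialLine n k L ∧ L ⊆ A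

lemma colourClasses_getD_of_ne (u : Fin n → Option (Fin k)) {i j : Fin k} (hij : j ≠ i) :
    colourClasses (fun x => (u x).getD i) j = ({x | u x = some j} : Finset (Fin n)) := by
  ext x
  rw [mem_colourClasses, Finset.mem_filter]
  cases u x <;> simp [Ne.symm hij]

lemma lineFree_preimage_colourClasses {C : Set (Fin k → Finset (Fin n))}
    (hC : IsCylinderIntersection C) (hCP : C ⊆ {S | IsPartitionTuple n k S}) :
    LineFree (colourClasses ⁻¹' C) := by
  rintro ⟨_, ⟨u, ⟨x₀, hx₀⟩, rfl⟩, hLC⟩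
  obtain ⟨Cs, hCs, rfl⟩ := hC
  set S : Fin k → Finset (Fin n) := fun j => ({x | u x = some j} : Finset (Fin n))
  have hS : S ∈ ⋂ i, Cs i := Set.mem_iInter.2 fun i =>
    (hCs i S _ fun j hij => (colourClasses_getD_of_ne u hij).symm).2
      (Set.mem_iInter.1 (hLC ⟨i, rfl⟩) i)
  obtain ⟨i, hi⟩ := (hCP hS).2 x₀
  simp [S, hx₀] at hi

end LineFree

section CylinderHull

variable {n k : ℕ}

def AgreesOffDiag (S : Fin k → Finset (Fin n)) (w : Fin k → Fin n → Fin k) : Prop :=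
  ∀ i j, j ≠ i → S j = colourClasses (w i) j

namespace AgreesOffDiag

variable {S : Fin k → Finset (Fin n)} {w : Fin k → Fin n → Fin k}

lemma disjoint (hk : 3 ≤ k) (hw : AgreesOffDiag S w) {i j : Fin k} (hij : i ≠ j) :
    Disjoint (S i) (S j) := by
  obtain ⟨l, hli, hlj⟩ := Fin.exists_ne_and_ne_of_two_lt i j hk
  rw [hw l i hli.symm, hw l j hlj.symm]
  exact (isPartitionTuple_colourClasses (w l)).1 i j hij

lemma apply_eq_of_mem (hk : 3 ≤ k) (hw : AgreesOffDiag S w) {x : Fin n} {c : Fin k}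
    (hx : x ∈ S c) (j : Fin k) : w j x = c := by
  by_cases hcj : c = j
  · subst hcj
    by_contra hne
    have hx' : x ∈ S (w c x) := (hw c _ hne) ▸ mem_colourClasses.2 rfl
    exact Finset.disjoint_left.1 (hw.disjoint hk hne) hx' hx
  · exact mem_colourClasses.1 (hw j c hcj ▸ hx)

lemma apply_eq_self_of_notMem (hw : AgreesOffDiag S w) {x : Fin n} (hx : ∀ c, x ∉ S c)
    (j : Fin k) : w j x = j := by
  by_contra hne
  exact hx (w j x) ((hw j _ hne) ▸ mem_colourClasses.2 rfl)

lemma eq_colourClasses (hk : 3 ≤ k) (hw : AgreesOffDiag S w) (hcover : ∀ x, ∃ c, x ∈ S c)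
    (j : Fin k) : S = colourClasses (w j) := by
  funext i
  ext x
  rw [mem_colourClasses]
  refine ⟨fun hi => hw.apply_eq_of_mem hk hi j, fun hwi => ?_⟩
  obtain ⟨c, hc⟩ := hcover x
  exact (hwi.symm.trans (hw.apply_eq_of_mem hk hc j)) ▸ hc

lemma isCombinatorialLine_range (hk : 3 ≤ k) (hw : AgreesOffDiag S w) {x₀ : Fin n}
    (hx₀ : ∀ c, x₀ ∉ S c) : IsCombinatorialLine n k (Set.range w) := by
  let u : Fin n → Option (Fin k) := fun x => if h : ∃ c, x ∈ S c then some h.choose else none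
  refine ⟨u, ⟨x₀, dif_neg (not_exists.2 hx₀)⟩,
    congrArg Set.range (funext fun j => funext fun x => ?_)⟩
  by_cases h : ∃ c, x ∈ S c
  · simp only [u, dif_pos h, Option.getD_some]
    exact hw.apply_eq_of_mem hk h.choose_spec j
  · simp only [u, dif_neg h, Option.getD_none]
    exact hw.apply_eq_self_of_notMem (not_exists.1 h) j

end AgreesOffDiag

def cylinderHull (A : Set (Fin n → Fin k)) (i : Fin k) : Set (Fin k → Finset (Fin n)) :=
  {S | ∃ w ∈ A, ∀ j, j ≠ i → S j = colourClasses w j}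

lemma isCylinder_cylinderHull (A : Set (Fin n → Fin k)) (i : Fin k) :
    IsCylinder i (cylinderHull A i) := by
  intro S T hST
  exact ⟨fun ⟨w, hw, h⟩ => ⟨w, hw, fun j hj => hST j hj ▸ h j hj⟩,
    fun ⟨w, hw, h⟩ => ⟨w, hw, fun j hj => (hST j hj).symm ▸ h j hj⟩⟩

lemma iInter_cylinderHull_eq_image (hk : 3 ≤ k) {A : Set (Fin n → Fin k)} (hA : LineFree A) :
    ⋂ i, cylinderHull A i = colourClasses '' A := by
  refine Set.Subset.antisymm (fun S hS => ?_) ?_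
  · choose w hwA hw using Set.mem_iInter.1 hS
    by_cases hcover : ∀ x, ∃ c, x ∈ S c
    · let j : Fin k := ⟨0, by omega⟩
      exact ⟨w j, hwA j, (AgreesOffDiag.eq_colourClasses hk hw hcover j).symm⟩
    · push Not at hcover
      obtain ⟨x₀, hx₀⟩ := hcover
      exact (hA ⟨_, AgreesOffDiag.isCombinatorialLine_range hk hw hx₀,
        Set.range_subset_iff.2 hwA⟩).elim
  · rintro _ ⟨w, hw, rfl⟩
    exact Set.mem_iInter.2 fun i => ⟨w, hw, fun _ _ => rfl⟩

lemma isCylinderIntersection_image_colourClasses (hk : 3 ≤ k) {A : Set (Fin n → Fin k)}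
    (hA : LineFree A) : IsCylinderIntersection (colourClasses '' A) :=
  ⟨cylinderHull A, isCylinder_cylinderHull A, (iInter_cylinderHull_eq_image hk hA).symm⟩

end CylinderHull

theorem densityHJ_eq_max_cylinder_intersection_general (n k : ℕ) (hk : 3 ≤ k) :
    densityHJ n k =
      sSup {m | ∃ C : Set (Fin k → Finset (Fin n)),
        IsCylinderIntersection C ∧ C ⊆ {S | IsPartitionTuple n k S} ∧
        Nat.card C = m} := by
  unfold densityHJ
  congr 1
  ext m
  constructor
  · rintro ⟨A, hA, rfl⟩
    refine ⟨colourClasses '' A, isCylinderIntersection_image_colourClasses hk hA, ?_,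
      Nat.card_image_of_injective colourClasses_injective A⟩
    rw [← range_colourClasses]
    exact Set.image_subset_range _ _
  · rintro ⟨C, hC, hCP, rfl⟩
    refine ⟨colourClasses ⁻¹' C, lineFree_preimage_colourClasses hC hCP, ?_⟩
    exact Nat.card_preimage_of_injective colourClasses_injective (range_colourClasses ▸ hCP)

/-- For `k ≥ 3` and `n ≥ 1`, the density Hales-Jewett number `c_{n,k}` equals the
maximum size of a cylinder intersection contained in `Part_{n,k}⁻¹(1)`, i.e. in the set
of `k`-tuples of subsets of `[n]` forming a partition of `[n]`. -/
theorem densityHJ_eq_max_cylinder_intersection (n k : ℕ) (hk : 3 ≤ k) (hn : 1 ≤ n) :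
    densityHJ n k =
      sSup {m | ∃ C : Set (Fin k → Finset (Fin n)),
        IsCylinderIntersection C ∧ C ⊆ {S | IsPartitionTuple n k S} ∧
        Nat.card C = m} :=
  densityHJ_eq_max_cylinder_intersection_general n k hk
end

section
/- For k ≥ 3 and n ≥ 1, the minimal number of cylinder intersections contained in Part_{n,k}⁻¹(1) needed to partition Part_{n,k}⁻¹(1) equals the minimal number of colors required to color [k]^n so that no combinatorial line is monochromatic. -/
/-!
A word `w ∈ [k]^n` is the partition tuple of its letter classes. If a cylinder intersection
contains the tuples of all points of a combinatorial line, it contains the tuple of the line's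
template, which agrees with the `i`-th point off coordinate `i` but misses the wildcard positions;
so it is not inside `Part⁻¹(1)`. Conversely, a line-free colouring gives cells whose `i`-th
cylinder reads the word off the parts other than `S i`, filling the rest with `i`, and checks
its colour. For `k ≥ 3` every pair of parts is seen by some cylinder, so a tuple in a cell is
disjoint; if it missed a position, its partial word would be the template of a monochromatic line.
-/

open Finset Function

section Cylinders

variable {k : ℕ} {X : Fin k → Type*}

theorem isCylinder_preimage_update (i : Fin k) (a : X i) (s : Set (∀ j, X j)) :
    IsCylinder i ((fun x => update x i a) ⁻¹' s) := by
  intro x y h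
  have hupdate : update x i a = update y i a := by
    funext j
    by_cases hj : j = i
    · subst hj; simp
    · simp [hj, h j hj]
  simp only [Set.mem_preimage, hupdate]

theorem IsCylinderIntersection.mem_of_forall_exists {C : Set (∀ j, X j)}
    (hC : IsCylinderIntersection C) {y : ∀ j, X j}
    (h : ∀ i, ∃ x ∈ C, ∀ j, j ≠ i → x j = y j) : y ∈ C := by
  obtain ⟨Cs, hCs, rfl⟩ := hC
  refine Set.mem_iInter.2 fun i => ?_
  obtain ⟨x, hx, hxy⟩ := h i
  exact (hCs i x y hxy).1 (Set.mem_iInter.1 hx i)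

end Cylinders

variable {n k : ℕ}

def partsOf {α : Type*} [DecidableEq α] (w : Fin n → α) (a : α) : Finset (Fin n) :=
  univ.filter (w · = a)

@[simp]
theorem mem_partsOf {α : Type*} [DecidableEq α] {w : Fin n → α} {a : α} {x : Fin n} :
    x ∈ partsOf w a ↔ w x = a := by
  simp [partsOf]

/-- The `j`-th point of the combinatorial line with template `w`, where `none` is the wildcard. -/
def lineWord (w : Fin n → Option (Fin k)) (j : Fin k) : Fin n → Fin k :=
  fun x => (w x).getD j

open Classical in
noncomputable def partialWord (S : Fin k → Finset (Fin n)) : Fin n → Option (Fin k) :=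
  fun x => if h : ∃ l, x ∈ S l then some h.choose else none

theorem isPartitionTuple_partsOf (w : Fin n → Fin k) : IsPartitionTuple n k (partsOf w) :=
  ⟨fun i j hij => disjoint_left.2 fun x hi hj => by
      rw [mem_partsOf] at hi hj
      exact hij (hi.symm.trans hj),
    fun x => ⟨w x, mem_partsOf.2 rfl⟩⟩

theorem partsOf_lineWord_of_ne (w : Fin n → Option (Fin k)) {i j : Fin k} (hij : i ≠ j) :
    partsOf (lineWord w j) i = partsOf w (some i) := by
  ext x
  rw [mem_partsOf, mem_partsOf, lineWord]
  cases w x <;> simp [hij.symm]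

theorem partialWord_eq_some {S : Fin k → Finset (Fin n)} (hS : Pairwise (Disjoint on S))
    {x : Fin n} {l : Fin k} (hx : x ∈ S l) : partialWord S x = some l := by
  have h : ∃ l, x ∈ S l := ⟨l, hx⟩
  rw [partialWord, dif_pos h, Option.some_inj]
  by_contra hne
  exact disjoint_left.1 (hS hne) h.choose_spec hx

theorem partialWord_eq_none {S : Fin k → Finset (Fin n)} {x : Fin n} (hx : ∀ l, x ∉ S l) :
    partialWord S x = none := by
  simp [partialWord, hx]

theorem update_empty_subset (S : Fin k → Finset (Fin n)) (i j : Fin k) :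
    update S i ∅ j ⊆ S j := by
  by_cases hj : j = i
  · subst hj; simp
  · simp [hj]

theorem Pairwise.disjoint_update_empty {S : Fin k → Finset (Fin n)}
    (hS : Pairwise (Disjoint on S)) (i : Fin k) : Pairwise (Disjoint on update S i ∅) :=
  fun _ _ hjl => (hS hjl).mono (update_empty_subset S i _) (update_empty_subset S i _)

theorem pairwise_disjoint_of_forall_update_empty (hk : 3 ≤ k) {S : Fin k → Finset (Fin n)}
    (h : ∀ i, Pairwise (Disjoint on update S i ∅)) : Pairwise (Disjoint on S) := by
  intro j l hjl
  have hcard : #({j, l} : Finset (Fin k)) < #(univ : Finset (Fin k)) := by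
    have := card_le_two (a := j) (b := l)
    simp only [card_univ, Fintype.card_fin]
    omega
  obtain ⟨i, -, hi⟩ := exists_mem_notMem_of_card_lt_card hcard
  simp only [mem_insert, mem_singleton, not_or] at hi
  simpa [onFun, update, Ne.symm hi.1, Ne.symm hi.2] using h i hjl

/-- Emptying `S i` only moves positions of `S i` to the wildcard, which the `i`-th line point
reads as `i` anyway. -/
theorem lineWord_partialWord_update_empty {S : Fin k → Finset (Fin n)}
    (hS : Pairwise (Disjoint on S)) (i : Fin k) :
    lineWord (partialWord (update S i ∅)) i = lineWord (partialWord S) i := by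
  funext x
  by_cases hcov : ∃ l, x ∈ S l
  · obtain ⟨l, hl⟩ := hcov
    rw [lineWord, lineWord, partialWord_eq_some hS hl]
    by_cases hli : l = i
    · subst hli
      rw [partialWord_eq_none fun l' hl' => ?_]
      · rfl
      by_cases hl'i : l' = l
      · simp [hl'i] at hl'
      · exact disjoint_left.1 (hS hl'i) (update_empty_subset S l l' hl') hl
    · rw [partialWord_eq_some (hS.disjoint_update_empty i) (l := l) (by simpa [hli] using hl)]
  · push Not at hcov
    rw [lineWord, lineWord, partialWord_eq_none hcov,
      partialWord_eq_none fun l hl => hcov l (update_empty_subset S i l hl)]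

theorem lineWord_partialWord_eq_of_isPartitionTuple {S : Fin k → Finset (Fin n)}
    (hS : IsPartitionTuple n k S) (i j : Fin k) :
    lineWord (partialWord S) i = lineWord (partialWord S) j := by
  funext x
  obtain ⟨l, hl⟩ := hS.2 x
  simp [lineWord, partialWord_eq_some hS.1 hl]

def IsLineFreeColoring {ι : Type*} (col : (Fin n → Fin k) → ι) : Prop :=
  ∀ L, IsCombinatorialLine n k L → ¬ ∃ c, ∀ w ∈ L, col w = c

def IsCylinderPartition {ι : Type*} (F : ι → Set (Fin k → Finset (Fin n))) : Prop :=
  (∀ j, IsCylinderIntersection (F j) ∧ F j ⊆ {S | IsPartitionTuple n k S}) ∧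
    ∀ S, IsPartitionTuple n k S → ∃! j, S ∈ F j

variable {ι : Type*}

theorem IsCylinderPartition.exists_isLineFreeColoring {F : ι → Set (Fin k → Finset (Fin n))}
    (hF : IsCylinderPartition F) : ∃ col : (Fin n → Fin k) → ι, IsLineFreeColoring col := by
  choose col hcol using fun w : Fin n → Fin k =>
    (hF.2 (partsOf w) (isPartitionTuple_partsOf w)).exists
  refine ⟨col, ?_⟩
  rintro L ⟨w, ⟨x₀, hx₀⟩, rfl⟩ ⟨c, hc⟩
  have hline : ∀ j, partsOf (lineWord w j) ∈ F c := fun j => hc _ ⟨j, rfl⟩ ▸ hcol _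
  have htemplate : (fun i => partsOf w (some i)) ∈ F c :=
    (hF.1 c).1.mem_of_forall_exists fun i =>
      ⟨_, hline i, fun _ hj => partsOf_lineWord_of_ne w hj⟩
  obtain ⟨i, hi⟩ := ((hF.1 c).2 htemplate).2 x₀
  simp [hx₀] at hi

/-- The `i`-th factor sees `S` only off `i`: emptying `S i` is how the cylinder is built. -/
def coloringCell (col : (Fin n → Fin k) → ι) (c : ι) : Set (Fin k → Finset (Fin n)) :=
  ⋂ i, (fun S => update S i ∅) ⁻¹'
    {T | Pairwise (Disjoint on T) ∧ col (lineWord (partialWord T) i) = c}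

theorem mem_coloringCell_iff (hk : 3 ≤ k) {col : (Fin n → Fin k) → ι} {c : ι}
    {S : Fin k → Finset (Fin n)} :
    S ∈ coloringCell col c ↔
      Pairwise (Disjoint on S) ∧ ∀ i, col (lineWord (partialWord S) i) = c := by
  simp only [coloringCell, Set.mem_iInter, Set.mem_preimage, Set.mem_ofPred_eq]
  constructor
  · intro h
    have hS := pairwise_disjoint_of_forall_update_empty hk fun i => (h i).1
    exact ⟨hS, fun i => lineWord_partialWord_update_empty hS i ▸ (h i).2⟩
  · rintro ⟨hS, hcol⟩ i
    exact ⟨hS.disjoint_update_empty i, (lineWord_partialWord_update_empty hS i).symm ▸ hcol i⟩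

theorem IsLineFreeColoring.isCylinderPartition_coloringCell (hk : 3 ≤ k)
    {col : (Fin n → Fin k) → ι} (hcol : IsLineFreeColoring col) :
    IsCylinderPartition (coloringCell col) := by
  refine ⟨fun c => ⟨⟨_, fun i => isCylinder_preimage_update i ∅ _, rfl⟩, fun S hS => ?_⟩,
    fun S hS => ?_⟩
  · obtain ⟨hdisj, hmono⟩ := (mem_coloringCell_iff hk).1 hS
    refine ⟨hdisj, fun x => ?_⟩
    by_contra! hx
    exact hcol _ ⟨partialWord S, ⟨x, partialWord_eq_none hx⟩, rfl⟩
      ⟨c, by rintro _ ⟨j, rfl⟩; exact hmono j⟩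
  · have i₀ : Fin k := ⟨0, by omega⟩
    refine ⟨col (lineWord (partialWord S) i₀), (mem_coloringCell_iff hk).2 ⟨hS.1, fun i => ?_⟩,
      fun c hc => (((mem_coloringCell_iff hk).1 hc).2 i₀).symm⟩
    rw [lineWord_partialWord_eq_of_isPartitionTuple hS i i₀]

theorem chromatic_part_eq_line_coloring_general (n k : ℕ) (hk : 3 ≤ k) :
    sInf {m | ∃ F : Fin m → Set (Fin k → Finset (Fin n)),
        (∀ j, IsCylinderIntersection (F j) ∧ F j ⊆ {S | IsPartitionTuple n k S}) ∧
        (∀ S, IsPartitionTuple n k S → ∃! j, S ∈ F j)} =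
    sInf {m | ∃ col : (Fin n → Fin k) → Fin m,
        ∀ L, IsCombinatorialLine n k L → ¬ ∃ c, ∀ w ∈ L, col w = c} := by
  congr 1
  ext m
  exact ⟨fun ⟨_, hF⟩ => IsCylinderPartition.exists_isLineFreeColoring hF,
    fun ⟨_, hcol⟩ => ⟨_, IsLineFreeColoring.isCylinderPartition_coloringCell hk hcol⟩⟩

/-- For `k ≥ 3` and `n ≥ 1`, the minimal number of cylinder intersections contained in
`Part_{n,k}⁻¹(1)` needed to partition `Part_{n,k}⁻¹(1)` equals the minimal number of
colors needed to color `[k]^n` with no monochromatic combinatorial line. -/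
theorem chromatic_part_eq_line_coloring (n k : ℕ) (hk : 3 ≤ k) (hn : 1 ≤ n) :
    sInf {m | ∃ F : Fin m → Set (Fin k → Finset (Fin n)),
        (∀ j, IsCylinderIntersection (F j) ∧ F j ⊆ {S | IsPartitionTuple n k S}) ∧
        (∀ S, IsPartitionTuple n k S → ∃! j, S ∈ F j)} =
    sInf {m | ∃ col : (Fin n → Fin k) → Fin m,
        ∀ L, IsCombinatorialLine n k L → ¬ ∃ c, ∀ w ∈ L, col w = c} :=
  chromatic_part_eq_line_coloring_general n k hk
end

section
/- For k ≥ 3: D(Part_{n,k}) ≤ D(Exactly_{n,k}) + 3 in the deterministic k-party NOF model, via the reduction where players check pairwise disjointness of S₁,…,S_k with 3 bits and then run an Exactly_{n,k} protocol on (|S₁|,…,|S_k|); correctness relies on the fact that pairwise disjoint subsets S₁,…,S_k of [n] form a partition of [n] if and only if |S₁| + ⋯ + |S_k| = n. -/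
inductive NOFProtocol {k : ℕ} (X : Fin k → Type*) : Type _ where
  | leaf : Bool → NOFProtocol X
  | node : (i : Fin k) → (msg : (∀ j, X j) → Bool) →
      (∀ x y : ∀ j, X j, (∀ j, j ≠ i → x j = y j) → msg x = msg y) →
      (Bool → NOFProtocol X) → NOFProtocol X

def NOFProtocol.eval {k : ℕ} {X : Fin k → Type*} : NOFProtocol X → (∀ j, X j) → Bool
  | .leaf b, _ => b
  | .node _ msg _ next, x => (next (msg x)).eval x

def NOFProtocol.cost {k : ℕ} {X : Fin k → Type*} : NOFProtocol X → ℕ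
  | .leaf _ => 0
  | .node _ _ _ next => 1 + max (next true).cost (next false).cost

def NOFProtocol.Computes {k : ℕ} {X : Fin k → Type*} (p : NOFProtocol X)
    (f : (∀ j, X j) → Bool) : Prop :=
  ∀ x, p.eval x = f x

noncomputable def Dcc {k : ℕ} {X : Fin k → Type*} (f : (∀ j, X j) → Bool) : ℕ :=
  sInf {c | ∃ p : NOFProtocol X, p.Computes f ∧ p.cost ≤ c}

/-- `Part_{n,k}(S₁,…,S_k) = 1` iff `(S₁,…,S_k)` is a partition of `[n]`. -/
def PartF (n k : ℕ) (S : Fin k → Finset (Fin n)) : Bool :=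
  decide ((∀ i j, i ≠ j → Disjoint (S i) (S j)) ∧ ∀ x : Fin n, ∃ i, x ∈ S i)

/-- `Exactly_{n,k}(x₁,…,x_k) = 1` iff `x₁ + ⋯ + x_k = n`, on inputs `xᵢ ∈ {0,…,n}`. -/
def ExactlyF (n k : ℕ) (x : Fin k → Fin (n + 1)) : Bool :=
  decide ((∑ i, (x i : ℕ)) = n)

section Aux
variable {k : ℕ} {X Y : Fin k → Type*}

/-- Pull back a protocol along a componentwise map. -/
def NOFProtocol.map (g : ∀ j, X j → Y j) : NOFProtocol Y → NOFProtocol X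
  | .leaf b => .leaf b
  | .node i msg h next => .node i (fun x => msg (fun j => g j (x j)))
      (fun x y hxy => h _ _ (fun j hj => by rw [hxy j hj]))
      (fun b => (next b).map g)

theorem NOFProtocol.eval_map (g : ∀ j, X j → Y j) (p : NOFProtocol Y) (x : ∀ j, X j) :
    (p.map g).eval x = p.eval (fun j => g j (x j)) := by
  induction p with
  | leaf b => rfl
  | node i msg h next ih => simp [NOFProtocol.map, NOFProtocol.eval, ih]

theorem NOFProtocol.cost_map (g : ∀ j, X j → Y j) (p : NOFProtocol Y) :
    (p.map g).cost = p.cost := by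
  induction p with
  | leaf b => rfl
  | node i msg h next ih => simp [NOFProtocol.map, NOFProtocol.cost, ih]

variable (i0 i1 : Fin k) [DecidableEq (X i0)]

/-- Brute force sub-protocol: for each `a` in the list, player `i1` announces whether
`x i0 = a` and player `i0` announces `f (update x i0 a)`. -/
def bruteAux (h01 : i0 ≠ i1) (f : (∀ j, X j) → Bool) (L : List (X i0)) (acc : Bool) : NOFProtocol X :=
  match L with
  | [] => .leaf acc
  | a :: rest =>
    .node i1 (fun x => decide (x i0 = a))
      (fun x y hxy => by simp only [hxy i0 h01])
      (fun d =>
        .node i0 (fun x => f (Function.update x i0 a))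
          (fun x y hxy => by
            have : Function.update x i0 a = Function.update y i0 a := by
              funext j
              by_cases hj : j = i0
              · subst hj; simp
              · rw [Function.update_of_ne hj, Function.update_of_ne hj, hxy j hj]
            simp only [this])
          (fun v => bruteAux h01 f rest (acc || (d && v))))

theorem bruteAux_eval (h01 : i0 ≠ i1) (f : (∀ j, X j) → Bool) (L : List (X i0)) (acc : Bool)
    (x : ∀ j, X j) :
    (bruteAux i0 i1 h01 f L acc).eval x =
      (acc || L.any (fun a => decide (x i0 = a) && f (Function.update x i0 a))) := by
  induction L generalizing acc with
  | nil => simp [bruteAux, NOFProtocol.eval]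
  | cons a rest ih =>
    simp only [bruteAux, NOFProtocol.eval, ih, List.any_cons]
    rw [Bool.or_assoc]

theorem exists_protocol [Fintype (X i0)] (h01 : i0 ≠ i1) (f : (∀ j, X j) → Bool) :
    ∃ p : NOFProtocol X, p.Computes f := by
  refine ⟨bruteAux i0 i1 h01 f (Finset.univ.toList) false, fun x => ?_⟩
  rw [bruteAux_eval]
  simp only [Bool.false_or]
  cases hf : f x with
  | true =>
    rw [List.any_eq_true]
    exact ⟨x i0, by simp, by simp [Function.update_eq_self, hf]⟩
  | false =>
    rw [List.any_eq_false]
    intro a _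
    by_cases ha : x i0 = a
    · subst ha
      simp [Function.update_eq_self, hf]
    · simp [ha]

end Aux

section Main
variable {n k : ℕ}

theorem key_lemma (S : Fin k → Finset (Fin n))
    (hd : ∀ i j, i ≠ j → Disjoint (S i) (S j)) :
    (∀ x : Fin n, ∃ i, x ∈ S i) ↔ (∑ i, (S i).card) = n := by
  have hcard : ∑ i, (S i).card = (Finset.univ.biUnion S).card :=
    (Finset.card_biUnion (fun i _ j _ hij => hd i j hij)).symm
  rw [hcard]
  constructor
  · intro h
    have huniv : Finset.univ.biUnion S = Finset.univ :=
      Finset.eq_univ_iff_forall.mpr fun x => by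
        obtain ⟨i, hi⟩ := h x
        exact Finset.mem_biUnion.mpr ⟨i, Finset.mem_univ i, hi⟩
    rw [huniv]; simp
  · intro h x
    have huniv : Finset.univ.biUnion S = Finset.univ :=
      Finset.eq_of_subset_of_card_le (Finset.subset_univ _) (by simp [h])
    have hx := Finset.eq_univ_iff_forall.mp huniv x
    obtain ⟨i, _, hi⟩ := Finset.mem_biUnion.mp hx
    exact ⟨i, hi⟩

/-- The componentwise map sending each set to its cardinality. -/
def cardMap (j : Fin k) (T : Finset (Fin n)) : Fin (n + 1) :=
  ⟨T.card, Nat.lt_succ_of_le (le_trans (Finset.card_le_univ T) (by simp))⟩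

/-- The reduction protocol: 3 bits for pairwise disjointness, then run `p` on cardinalities. -/
def partProtocol (i0 i1 i2 : Fin k) (h01 : i0 ≠ i1) (h02 : i0 ≠ i2) (h12 : i1 ≠ i2)
    (p : NOFProtocol (fun _ : Fin k => Fin (n + 1))) :
    NOFProtocol (fun _ : Fin k => Finset (Fin n)) :=
  .node i0 (fun S => decide (∀ j l, j ≠ i0 → l ≠ i0 → j ≠ l → Disjoint (S j) (S l)))
    (fun x y hxy => by
      refine decide_eq_decide.mpr ⟨fun h j l hj hl hjl => ?_, fun h j l hj hl hjl => ?_⟩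
      · rw [← hxy j hj, ← hxy l hl]; exact h j l hj hl hjl
      · rw [hxy j hj, hxy l hl]; exact h j l hj hl hjl)
    (fun r1 => if r1 then
      .node i1 (fun S => decide (∀ l, l ≠ i0 → l ≠ i1 → Disjoint (S i0) (S l)))
        (fun x y hxy => by
          refine decide_eq_decide.mpr ⟨fun h l hl0 hl1 => ?_, fun h l hl0 hl1 => ?_⟩
          · rw [← hxy i0 h01, ← hxy l hl1]; exact h l hl0 hl1
          · rw [hxy i0 h01, hxy l hl1]; exact h l hl0 hl1)
        (fun r2 => if r2 then
          .node i2 (fun S => decide (Disjoint (S i0) (S i1)))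
            (fun x y hxy => by simp only [hxy i0 h02, hxy i1 h12])
            (fun r3 => if r3 then p.map cardMap else .leaf false)
          else .leaf false)
      else .leaf false)

theorem partProtocol_cost (i0 i1 i2 : Fin k) (h01 : i0 ≠ i1) (h02 : i0 ≠ i2) (h12 : i1 ≠ i2)
    (p : NOFProtocol (fun _ : Fin k => Fin (n + 1))) :
    (partProtocol i0 i1 i2 h01 h02 h12 p).cost = p.cost + 3 := by
  simp [partProtocol, NOFProtocol.cost, NOFProtocol.cost_map]
  omega

theorem partProtocol_computes (i0 i1 i2 : Fin k) (h01 : i0 ≠ i1) (h02 : i0 ≠ i2)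
    (h12 : i1 ≠ i2) (p : NOFProtocol (fun _ : Fin k => Fin (n + 1)))
    (hp : p.Computes (ExactlyF n k)) :
    (partProtocol i0 i1 i2 h01 h02 h12 p).Computes (PartF n k) := by
  intro S
  simp only [partProtocol, NOFProtocol.eval, decide_eq_true_eq]
  by_cases h1 : ∀ j l, j ≠ i0 → l ≠ i0 → j ≠ l → Disjoint (S j) (S l)
  · rw [if_pos h1]
    simp only [NOFProtocol.eval, decide_eq_true_eq]
    by_cases h2 : ∀ l, l ≠ i0 → l ≠ i1 → Disjoint (S i0) (S l)
    · rw [if_pos h2]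
      simp only [NOFProtocol.eval, decide_eq_true_eq]
      by_cases h3 : Disjoint (S i0) (S i1)
      · rw [if_pos h3]
        have hd : ∀ i j, i ≠ j → Disjoint (S i) (S j) := by
          intro i j hij
          by_cases hi : i = i0
          · subst hi
            by_cases hj1 : j = i1
            · subst hj1; exact h3
            · exact h2 j (Ne.symm hij) hj1
          · by_cases hj : j = i0
            · subst hj
              by_cases hi1 : i = i1
              · subst hi1; exact h3.symm
              · exact (h2 i hi hi1).symm
            · exact h1 i j hi hj hij
        rw [NOFProtocol.eval_map, hp]
        simp only [ExactlyF, PartF, cardMap]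
        refine decide_eq_decide.mpr ⟨fun h => ⟨hd, (key_lemma S hd).mpr h⟩,
          fun h => (key_lemma S hd).mp h.2⟩
      · rw [if_neg h3]
        symm
        simp only [NOFProtocol.eval, PartF, decide_eq_false_iff_not]
        rintro ⟨hdisj, -⟩
        exact h3 (hdisj i0 i1 h01)
    · rw [if_neg h2]
      symm
      simp only [NOFProtocol.eval, PartF, decide_eq_false_iff_not]
      rintro ⟨hdisj, -⟩
      exact h2 fun l hl0 _ => hdisj i0 l (Ne.symm hl0)
  · rw [if_neg h1]
    symm
    simp only [NOFProtocol.eval, PartF, decide_eq_false_iff_not]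
    rintro ⟨hdisj, -⟩
    exact h1 fun j l _ _ hjl => hdisj j l hjl

end Main

/-- For `k ≥ 3`: `D(Part_{n,k}) ≤ D(Exactly_{n,k}) + 3`; moreover the key combinatorial
fact behind the reduction holds: pairwise disjoint subsets `S₁,…,S_k` of `[n]` form a
partition of `[n]` if and only if `|S₁| + ⋯ + |S_k| = n`. -/
theorem dcc_part_le_exactly_add_three (n k : ℕ) (hk : 3 ≤ k) :
    Dcc (PartF n k) ≤ Dcc (ExactlyF n k) + 3 ∧
    (∀ S : Fin k → Finset (Fin n), (∀ i j, i ≠ j → Disjoint (S i) (S j)) →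
      ((∀ x : Fin n, ∃ i, x ∈ S i) ↔ (∑ i, (S i).card) = n)) := by
  refine ⟨?_, fun S hd => key_lemma S hd⟩
  obtain ⟨p0, hp0⟩ := exists_protocol (X := fun _ : Fin k => Fin (n + 1))
    ⟨0, by omega⟩ ⟨1, by omega⟩ (by simp [Fin.ext_iff]) (ExactlyF n k)
  have hne : {c | ∃ p : NOFProtocol (fun _ : Fin k => Fin (n + 1)),
      p.Computes (ExactlyF n k) ∧ p.cost ≤ c}.Nonempty := ⟨p0.cost, p0, hp0, le_rfl⟩
  obtain ⟨p, hp, hpc⟩ : ∃ p : NOFProtocol (fun _ : Fin k => Fin (n + 1)),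
      p.Computes (ExactlyF n k) ∧ p.cost ≤ Dcc (ExactlyF n k) := Nat.sInf_mem hne
  apply Nat.sInf_le
  refine ⟨partProtocol ⟨0, by omega⟩ ⟨1, by omega⟩ ⟨2, by omega⟩
    (by simp [Fin.ext_iff]) (by simp [Fin.ext_iff]) (by simp [Fin.ext_iff]) p,
    partProtocol_computes _ _ _ _ _ _ p hp, ?_⟩
  rw [partProtocol_cost]
  omega
end
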